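/- arXiv:math/9902072 — 2 statements merged into one kernel-verified Lean document; each statement's English description precedes it below -/
import Mathlib

section
/- For every Young diagram λ inside the k×(n−k) rectangle, the length (number of inversions) of the permutation w_λ equals |λ|; equivalently, the defining expression of w_λ as a product of |λ| adjacent transpositions is a reduced word. -/
open scoped Classical

set_option maxHeartbeats 1000000
set_option synthInstance.maxHeartbeats 1000000

noncomputable section

/-- The field ℚ(v) of rational functions. -/
abbrev F : Type := RatFunc ℚ

/-- The variable v. -/
def v : F := RatFunc.X

/-- The quantum integer [r] = (v^r - v^{-r})/(v - v^{-1}). -/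
def qint (r : ℕ) : F := (v ^ r - v⁻¹ ^ r) / (v - v⁻¹)

/-- Sequences of n signs (`true` = `+`) with exactly k pluses. -/
abbrev Stt (n k : ℕ) := {ε : Fin n → Bool // (Finset.univ.filter fun t => ε t = true).card = k}

/-- The adjacent transposition s_m ∈ S_n (1-based: swaps positions m and m+1). -/
def sperm (n m : ℕ) : Equiv.Perm (Fin n) :=
  if h : 1 ≤ m ∧ m < n then Equiv.swap ⟨m - 1, by omega⟩ ⟨m, h.2⟩ else 1

/-- Action of w ∈ S_n on sequences: (w·ε)_{w(t)} = ε_t. -/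
def actE {n : ℕ} (w : Equiv.Perm (Fin n)) (ε : Fin n → Bool) : Fin n → Bool :=
  fun u => ε (w⁻¹ u)

lemma card_actE {n k : ℕ} (w : Equiv.Perm (Fin n)) (ε : Fin n → Bool)
    (h : (Finset.univ.filter fun t => ε t = true).card = k) :
    (Finset.univ.filter fun t => actE w ε t = true).card = k := by
  rw [← h]
  apply Finset.card_bij (fun t _ => w⁻¹ t)
  · intro a ha
    simp only [Finset.mem_filter, Finset.mem_univ, true_and, actE] at ha ⊢
    exact (Finset.mem_filter.mp ha).2
  · intro a _ b _ hab
    exact (Equiv.injective _) hab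
  · intro b hb
    simp only [Finset.mem_filter, Finset.mem_univ, true_and, actE] at hb ⊢
    exact ⟨w b, Finset.mem_filter.mpr ⟨Finset.mem_univ _, by simpa [actE] using hb⟩, by simp⟩

/-- Action of S_n on the set E of sequences with k pluses. -/
def actS {n k : ℕ} (w : Equiv.Perm (Fin n)) (ε : Stt n k) : Stt n k :=
  ⟨actE w ε.1, card_actE w ε.1 ε.2⟩

/-- The module M, free over ℚ(v) with basis E. -/
abbrev M (n k : ℕ) := Stt n k → F

/-- The basis vector of M corresponding to ε ∈ E. -/
def bv {n k : ℕ} (ε : Stt n k) : M n k := Pi.single ε 1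

/-- The sequence 𝟏 = (+,…,+,−,…,−) (k pluses then n−k minuses). -/
def oneSeq (n k : ℕ) : Fin n → Bool := fun t => decide ((t : ℕ) < k)

lemma card_oneSeq (n k : ℕ) (h : k ≤ n) :
    (Finset.univ.filter fun t => oneSeq n k t = true).card = k := by
  have : (Finset.univ.filter fun t => oneSeq n k t = true)
      = Finset.univ.map (Fin.castLEEmb h) := by
    ext t
    simp only [Finset.mem_filter, Finset.mem_univ, true_and, oneSeq, decide_eq_true_eq,
      Finset.mem_map]
    constructor
    · intro ht; exact ⟨⟨t, ht⟩, rfl⟩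
    · rintro ⟨s, rfl⟩; exact s.2
  rw [this, Finset.card_map, Finset.card_univ, Fintype.card_fin]

/-- 𝟏 as an element of E. -/
def oneS (n k : ℕ) (h : k ≤ n) : Stt n k := ⟨oneSeq n k, card_oneSeq n k h⟩

/-- The operator T_m on M (1 ≤ m ≤ n−1), defined on basis elements. -/
def Thk (n k : ℕ) (m : ℕ) : M n k →ₗ[F] M n k :=
  (Pi.basisFun F (Stt n k)).constr ℕ fun ε =>
    if h : 1 ≤ m ∧ m < n then
      let a := ε.1 ⟨m - 1, by omega⟩
      let b := ε.1 ⟨m, h.2⟩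
      if a = true ∧ b = false then bv (actS (sperm n m) ε)
      else if a = b then (-v⁻¹) • bv ε
      else bv (actS (sperm n m) ε) + (v - v⁻¹) • bv ε
    else 0

/-- A Young diagram inside the k×(n−k) rectangle, given by its row lengths
(1-based: row i has lam i boxes). -/
def IsYoung (n k : ℕ) (lam : ℕ → ℕ) : Prop :=
  (∀ i, 1 ≤ i → lam (i + 1) ≤ lam i) ∧ lam 1 ≤ n - k ∧ (∀ i, k < i → lam i = 0)

/-- The boxes of λ, listed row by row from the bottom row to the top row,
each row from its last box to its first (so box (1,1) comes last). -/
def boxList (k : ℕ) (lam : ℕ → ℕ) : List (ℕ × ℕ) :=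
  ((List.range k).reverse.map fun i' =>
    (List.range (lam (i' + 1))).reverse.map fun j' => (i' + 1, j' + 1)).flatten

/-- The word of w_λ: letter k+j−i for box (i,j). -/
def wword (k : ℕ) (lam : ℕ → ℕ) : List ℕ := (boxList k lam).map fun b => k + b.2 - b.1

/-- The permutation w_λ = ∏_{(i,j)∈λ} s_{k+j−i} (box (1,1) rightmost). -/
def wperm (n k : ℕ) (lam : ℕ → ℕ) : Equiv.Perm (Fin n) := ((wword k lam).map (sperm n)).prod

/-- w_λ·𝟏 as an element of E. -/
def wSt (n k : ℕ) (h : k ≤ n) (lam : ℕ → ℕ) : Stt n k := actS (wperm n k lam) (oneS n k h)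

/-- r is the system of shifts of λ: r_{ij} = max(r_{i,j+1}, r_{i+1,j}) + 1 on boxes of λ,
and r_{ij} = 0 off λ. -/
def IsShifts (lam : ℕ → ℕ) (r : ℕ → ℕ → ℕ) : Prop :=
  ∀ i j, r i j = if 1 ≤ i ∧ 1 ≤ j ∧ j ≤ lam i then max (r i (j + 1)) (r (i + 1) j) + 1 else 0

/-- The operator X_λ = ∏_{(i,j)∈λ} (T_{k+j−i} − v^{r_{ij}}/[r_{ij}]), the factor of
box (1,1) applied first. -/
def Xop (n k : ℕ) (lam : ℕ → ℕ) (r : ℕ → ℕ → ℕ) : Module.End F (M n k) :=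
  ((boxList k lam).map fun b =>
    (Thk n k (k + b.2 - b.1) - (v ^ r b.1 b.2 / qint (r b.1 b.2)) • (1 : Module.End F (M n k)) : Module.End F (M n k))).prod

/-- O(v^m): rational functions with a zero of order ≥ m at v = 0. -/
def Ozero (m : ℕ) : Set F :=
  {f | ∃ p q : Polynomial ℚ, Polynomial.eval 0 q ≠ 0 ∧
        f = v ^ m * (algebraMap (Polynomial ℚ) F p / algebraMap (Polynomial ℚ) F q)}

/-- Value of a sequence at the 1-based position t. -/
def posVal {n : ℕ} (ε : Fin n → Bool) (t : ℕ) : Bool :=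
  if h : 1 ≤ t ∧ t ≤ n then ε ⟨t - 1, by omega⟩ else false

/-- a(i) = k + λ_i − i + 1 for 1 ≤ i ≤ k, and a(i) = 0 for i > k. -/
def aF (k : ℕ) (lam : ℕ → ℕ) (i : ℕ) : ℕ := if i ≤ k then k + lam i + 1 - i else 0

/-- The contribution r_t(ε) to the weight. -/
def weightT (k : ℕ) (lam : ℕ → ℕ) (r : ℕ → ℕ → ℕ) {n : ℕ} (ε : Fin n → Bool) (t : ℕ) : ℕ :=
  ∑ i ∈ Finset.Icc 1 k,
    ((if posVal ε t = false ∧ 1 ≤ lam i ∧ t = aF k lam i then r i (lam i) - 1 else 0) +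
     (if posVal ε t = true ∧ aF k lam (i + 1) < t ∧ t < aF k lam i then r i (t + i - k) else 0))

/-- The weight r_λ(ε) = Σ_{t=1}^n r_t(ε). -/
def weight (n k : ℕ) (lam : ℕ → ℕ) (r : ℕ → ℕ → ℕ) (ε : Fin n → Bool) : ℕ :=
  ∑ t ∈ Finset.Icc 1 n, weightT k lam r ε t

/-- 𝓛_λ = Σ_ε O(v^{r_λ(ε)}) ε. -/
def Lset (n k : ℕ) (lam : ℕ → ℕ) (r : ℕ → ℕ → ℕ) : Set (M n k) :=
  {m | ∀ ε : Stt n k, m ε ∈ Ozero (weight n k lam r ε.1)}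

/-- The length (number of inversions) of a permutation. -/
def len {n : ℕ} (w : Equiv.Perm (Fin n)) : ℕ :=
  (Finset.univ.filter fun p : Fin n × Fin n => p.1 < p.2 ∧ w p.2 < w p.1).card

/-- The parabolic subgroup W_J = S_k × S_{n−k}: permutations mapping {1,…,k} to itself. -/
def WJ (n k : ℕ) : Set (Equiv.Perm (Fin n)) :=
  {σ | ∀ t : Fin n, (t : ℕ) < k → ((σ t : ℕ) < k)}

/-- W^J: permutations of minimal length in their coset w·W_J. -/
def Wmin (n k : ℕ) : Set (Equiv.Perm (Fin n)) :=
  {w | ∀ σ ∈ WJ n k, len w ≤ len (w * σ)}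

/-- The variable x_p (1-based position p) in ℚ(v)[x_1,…,x_n]. -/
def xv (n p : ℕ) : MvPolynomial (Fin n) F :=
  if h : 1 ≤ p ∧ p ≤ n then MvPolynomial.X ⟨p - 1, by omega⟩ else 0

/-- Exchange of the variables x_i and x_{i+1} (1-based, 1 ≤ i ≤ n−1). -/
def swapf (n i : ℕ) (f : MvPolynomial (Fin n) F) : MvPolynomial (Fin n) F :=
  if h : 1 ≤ i ∧ i < n then
    MvPolynomial.rename (Equiv.swap ⟨i - 1, by omega⟩ ⟨i, h.2⟩) f
  else f

/-- The divided difference ∂_i f = (f − s_i f)/(x_i − x_{i+1}). -/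
def ddiff (n i : ℕ) (f : MvPolynomial (Fin n) F) : MvPolynomial (Fin n) F :=
  if h : ∃ g, f - swapf n i f = (xv n i - xv n (i + 1)) * g then h.choose else 0

/-- The operator ∇_i f = (v x_{i+1} − v⁻¹ x_i)·∂_i f. -/
def nabla (n i : ℕ) (f : MvPolynomial (Fin n) F) : MvPolynomial (Fin n) F :=
  (MvPolynomial.C v * xv n (i + 1) - MvPolynomial.C v⁻¹ * xv n i) * ddiff n i f

/-- Parenthesis matching: minuses (`false`) are openers, pluses (`true`) are closers;
each plus is matched with the most recent unmatched minus, i.e. each minus with the first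
subsequent unmatched plus.  Returns the list of matched pairs (p,q) of 1-based positions
and the list of unmatched minus positions. -/
def matchAux : List Bool → ℕ → List ℕ → List (ℕ × ℕ) × List ℕ
  | [], _, stack => ([], stack)
  | b :: rest, pos, stack =>
    if b then
      match stack with
      | [] => matchAux rest (pos + 1) []
      | p :: stack' =>
        let res := matchAux rest (pos + 1) stack'
        ((p, pos) :: res.1, res.2)
    else matchAux rest (pos + 1) (pos :: stack)

/-- d(ε) = #{(p,q) : p < q, ε_p = −, ε_q = +}. -/
def dstat {n : ℕ} (ε : Fin n → Bool) : ℕ :=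
  (Finset.univ.filter fun pq : Fin n × Fin n =>
    pq.1 < pq.2 ∧ ε pq.1 = false ∧ ε pq.2 = true).card

/-- The polynomial Q_ε. -/
def Qpoly (n : ℕ) (ε : Fin n → Bool) : MvPolynomial (Fin n) F :=
  MvPolynomial.C (v⁻¹ ^ dstat ε) *
    ((matchAux (List.ofFn ε) 1 []).1.map fun pq =>
        xv n pq.1 - MvPolynomial.C (v ^ (pq.2 + 1 - pq.1)) * xv n pq.2).prod *
    ((matchAux (List.ofFn ε) 1 []).2.map fun p => xv n p).prod

/-- The operator T_m on M′ (the parabolic module induced from T_j ↦ v). -/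
def Thk' (n k : ℕ) (m : ℕ) : M n k →ₗ[F] M n k :=
  (Pi.basisFun F (Stt n k)).constr ℕ fun ε =>
    if h : 1 ≤ m ∧ m < n then
      let a := ε.1 ⟨m - 1, by omega⟩
      let b := ε.1 ⟨m, h.2⟩
      if a = true ∧ b = false then bv (actS (sperm n m) ε)
      else if a = b then v • bv ε
      else bv (actS (sperm n m) ε) + (v - v⁻¹) • bv ε
    else 0

/-- The map Φ : M′ → ℚ(v)[x_1,…,x_n], ε ↦ v^{−d(ε)} ∏_{t : ε_t = −} x_t. -/
def Phi (n k : ℕ) : M n k →ₗ[F] MvPolynomial (Fin n) F :=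
  (Pi.basisFun F (Stt n k)).constr ℕ fun ε =>
    MvPolynomial.C (v⁻¹ ^ dstat ε.1) *
      ∏ t ∈ Finset.univ.filter (fun t => ε.1 t = false), MvPolynomial.X t

/-- The space P(k,n): polynomials homogeneous of total degree n−k, of degree ≤ 1 in each
variable. -/
def Pspace (n k : ℕ) : Set (MvPolynomial (Fin n) F) :=
  {f | f.IsHomogeneous (n - k) ∧ ∀ t : Fin n, f.degreeOf t ≤ 1}

/-
Removing the last box of the bottom nonempty row `i` of `λ` gives a diagram `μ` with
`w_λ = s_m w_μ`, where `m = k + λ_i - i`. By induction on `|λ|`, `w_μ` is the Grassmannian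
permutation of shape `μ`: it sends the 0-based position `k - j` to `k - j + μ_j` and is increasing
on the positions `≥ k`. Then `w_μ⁻¹ (m - 1) = k - i < w_μ⁻¹ m`, so left multiplication by `s_m`
creates exactly one new inversion and `ℓ(w_λ) = ℓ(w_μ) + 1`.
-/

section Inversions

variable {n : ℕ}

lemma len_one : len (1 : Equiv.Perm (Fin n)) = 0 := by
  rw [len, Finset.card_eq_zero, Finset.filter_eq_empty_iff]
  exact fun _ _ ⟨h1, h2⟩ => lt_asymm h1 h2

lemma swap_apply_lt_swap_apply_iff {x y : Fin n} (hxy : (y : ℕ) = x + 1) (c d : Fin n) :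
    Equiv.swap x y d < Equiv.swap x y c ↔ (d < c ∧ ¬(c = y ∧ d = x)) ∨ (c = x ∧ d = y) := by
  rw [Equiv.swap_apply_def, Equiv.swap_apply_def]
  split_ifs <;> simp only [Fin.lt_def, Fin.ext_iff] at * <;> omega

lemma len_swap_mul_of_inv_lt {x y : Fin n} (hxy : (y : ℕ) = x + 1) {w : Equiv.Perm (Fin n)}
    (h : w⁻¹ x < w⁻¹ y) : len (Equiv.swap x y * w) = len w + 1 := by
  have hinv : ∀ {p c}, w p = c ↔ p = w⁻¹ c := fun {p c} => Equiv.Perm.eq_inv_iff_eq.symm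
  have key : (Finset.univ.filter fun p : Fin n × Fin n =>
      p.1 < p.2 ∧ (Equiv.swap x y * w) p.2 < (Equiv.swap x y * w) p.1)
      = insert (w⁻¹ x, w⁻¹ y)
        (Finset.univ.filter fun p : Fin n × Fin n => p.1 < p.2 ∧ w p.2 < w p.1) := by
    ext ⟨p, q⟩
    rw [Finset.mem_insert, Finset.mem_filter, Finset.mem_filter]
    simp only [Finset.mem_univ, true_and, Equiv.Perm.mul_apply, Prod.mk.injEq]
    rw [swap_apply_lt_swap_apply_iff hxy, hinv, hinv, hinv, hinv]
    by_cases hpq : p < q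
    · constructor
      · rintro ⟨-, (⟨hlt, -⟩ | hpq')⟩
        · exact Or.inr ⟨hpq, hlt⟩
        · exact Or.inl hpq'
      · rintro (hpq' | ⟨-, hlt⟩)
        · exact ⟨hpq, Or.inr hpq'⟩
        · exact ⟨hpq, Or.inl ⟨hlt, fun ⟨hp, hq⟩ => absurd (hq ▸ hp ▸ hpq) (not_lt.2 h.le)⟩⟩
    · simp only [hpq, false_and, or_false, false_iff, not_and]
      rintro rfl rfl
      exact hpq h
  rw [len, key, Finset.card_insert_of_notMem, len]
  simp [Fin.le_def, hxy]

end Inversions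

section Boxes

variable {k : ℕ} {lam : ℕ → ℕ}

def boxRow (lam : ℕ → ℕ) (i : ℕ) : List (ℕ × ℕ) :=
  (List.range (lam i)).reverse.map fun j' => (i, j' + 1)

lemma boxList_succ (k : ℕ) (lam : ℕ → ℕ) :
    boxList (k + 1) lam = boxRow lam (k + 1) ++ boxList k lam := by
  simp [boxList, boxRow, List.range_succ]

lemma length_boxList (k : ℕ) (lam : ℕ → ℕ) :
    (boxList k lam).length = ∑ i ∈ Finset.Icc 1 k, lam i := by
  induction k with
  | zero => rfl
  | succ k ih =>
    rw [boxList_succ, List.length_append, ih, Finset.sum_Icc_succ_top (by omega), boxRow,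
      List.length_map, List.length_reverse, List.length_range, add_comm]

lemma boxList_congr {mu : ℕ → ℕ} (h : ∀ i ∈ Finset.Icc 1 k, lam i = mu i) :
    boxList k lam = boxList k mu := by
  induction k with
  | zero => rfl
  | succ k ih =>
    rw [boxList_succ, boxList_succ, boxRow, boxRow, h (k + 1) (by simp),
      ih fun i hi => h i (Finset.Icc_subset_Icc_right k.le_succ hi)]

lemma boxList_eq_of_le {i : ℕ} (hik : i ≤ k) (h : ∀ j, i < j → lam j = 0) :
    boxList k lam = boxList i lam := by
  induction k, hik using Nat.le_induction with
  | base => rfl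
  | succ k hik ih => rw [boxList_succ, boxRow, h (k + 1) (by omega), ih]; rfl

def IsBottomRow (k : ℕ) (lam : ℕ → ℕ) (i : ℕ) : Prop :=
  i ∈ Finset.Icc 1 k ∧ 0 < lam i ∧ ∀ j, i < j → lam j = 0

lemma boxList_eq_cons {i : ℕ} (h : IsBottomRow k lam i) :
    boxList k lam = (i, lam i) :: boxList k (Function.update lam i (lam i - 1)) := by
  obtain ⟨hi, hpos, hzero⟩ := h
  rw [Finset.mem_Icc] at hi
  have hzero' : ∀ j, i < j → Function.update lam i (lam i - 1) j = 0 := fun j hj => by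
    rw [Function.update_of_ne (by omega), hzero j hj]
  rw [boxList_eq_of_le hi.2 hzero, boxList_eq_of_le hi.2 hzero']
  obtain ⟨i, rfl⟩ : ∃ i', i = i' + 1 := ⟨i - 1, by omega⟩
  obtain ⟨l, hl⟩ : ∃ l, lam (i + 1) = l + 1 := ⟨lam (i + 1) - 1, by omega⟩
  have hrows : boxList i (Function.update lam (i + 1) (lam (i + 1) - 1)) = boxList i lam :=
    boxList_congr fun j hj => Function.update_of_ne (by simp at hj; omega) _ _
  rw [boxList_succ, boxList_succ, hrows, boxRow, boxRow, Function.update_self, hl,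
    List.range_succ]
  simp

end Boxes

namespace IsYoung

variable {n k : ℕ} {lam : ℕ → ℕ}

lemma antitone (hY : IsYoung n k lam) {i j : ℕ} (hi : 1 ≤ i) (hij : i ≤ j) : lam j ≤ lam i := by
  induction j, hij using Nat.le_induction with
  | base => rfl
  | succ j hij ih => exact (hY.1 j (by omega)).trans ih

lemma apply_le_sub (hY : IsYoung n k lam) {i : ℕ} (hi : 1 ≤ i) : lam i ≤ n - k :=
  (hY.antitone le_rfl hi).trans hY.2.1

lemma exists_isBottomRow (hY : IsYoung n k lam) (h : ∑ i ∈ Finset.Icc 1 k, lam i ≠ 0) :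
    ∃ i, IsBottomRow k lam i := by
  set rows := (Finset.Icc 1 k).filter fun i => 0 < lam i
  have hne : rows.Nonempty := by
    obtain ⟨i, hi, hpos⟩ := Finset.exists_ne_zero_of_sum_ne_zero h
    exact ⟨i, Finset.mem_filter.2 ⟨hi, Nat.pos_of_ne_zero hpos⟩⟩
  obtain ⟨hmem, hpos⟩ := Finset.mem_filter.1 (rows.max'_mem hne)
  refine ⟨rows.max' hne, hmem, hpos, fun j hj => ?_⟩
  by_cases hjk : j ≤ k
  · by_contra hj0
    have : j ∈ rows := Finset.mem_filter.2 ⟨Finset.mem_Icc.2 ⟨by omega, hjk⟩, by omega⟩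
    exact absurd (rows.le_max' j this) (not_le.2 hj)
  · exact hY.2.2 j (by omega)

lemma update_bottomRow (hY : IsYoung n k lam) {i : ℕ} (h : IsBottomRow k lam i) :
    IsYoung n k (Function.update lam i (lam i - 1)) := by
  obtain ⟨hi, -, hzero⟩ := h
  rw [Finset.mem_Icc] at hi
  refine ⟨fun j hj => ?_, ?_, fun j hj => ?_⟩
  · have := hY.1 j hj
    have := hzero (j + 1)
    simp only [Function.update_apply]
    split_ifs <;> subst_vars <;> omega
  · have := hY.2.1
    simp only [Function.update_apply]
    split_ifs <;> subst_vars <;> omega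
  · rw [Function.update_of_ne (by omega)]
    exact hY.2.2 j hj

end IsYoung

lemma sum_update_bottomRow {k : ℕ} {lam : ℕ → ℕ} {i : ℕ} (h : IsBottomRow k lam i) :
    ∑ j ∈ Finset.Icc 1 k, Function.update lam i (lam i - 1) j + 1 =
      ∑ j ∈ Finset.Icc 1 k, lam j := by
  rw [Finset.sum_update_of_mem h.1, Finset.sdiff_singleton_eq_erase,
    ← Finset.add_sum_erase _ _ h.1]
  have := h.2.1
  omega

lemma StrictMonoOn.swap_mul {n : ℕ} {x y : Fin n} (hxy : (y : ℕ) = x + 1)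
    {w : Equiv.Perm (Fin n)} {s : Set (Fin n)} (hw : StrictMonoOn w s) (hx : ∀ p ∈ s, w p ≠ x) :
    StrictMonoOn (Equiv.swap x y * w) s := fun a ha _ hb hab =>
  (swap_apply_lt_swap_apply_iff hxy _ _).2 (Or.inl ⟨hw ha hb hab, fun h => hx a ha h.2⟩)

section Grassmannian

variable {n k : ℕ} {lam : ℕ → ℕ}

/-- Row `i` of `λ` sits at the 0-based position `k - i`. -/
def IsGrassmannianOfShape (k : ℕ) (lam : ℕ → ℕ) (w : Equiv.Perm (Fin n)) : Prop :=
  (∀ p : Fin n, (p : ℕ) < k → (w p : ℕ) = p + lam (k - p)) ∧ StrictMonoOn w {p | k ≤ (p : ℕ)}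

lemma isGrassmannianOfShape_one (h : ∀ i ∈ Finset.Icc 1 k, lam i = 0) :
    IsGrassmannianOfShape k lam (1 : Equiv.Perm (Fin n)) :=
  ⟨fun p hp => by rw [h (k - p) (Finset.mem_Icc.2 ⟨by omega, by omega⟩)]; rfl,
    fun _ _ _ _ h => h⟩

namespace IsGrassmannianOfShape

variable {i : ℕ} {w : Equiv.Perm (Fin n)}

lemma apply_of_lt_bottomRow (h : IsBottomRow k lam i)
    (hw : IsGrassmannianOfShape k (Function.update lam i (lam i - 1)) w) {p : Fin n}
    (hp : (p : ℕ) < k - i) : w p = p := by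
  have hi := Finset.mem_Icc.1 h.1
  apply Fin.ext
  rw [hw.1 p (by omega), Function.update_of_ne (by omega), h.2.2 _ (by omega), add_zero]

lemma apply_bottomRow (h : IsBottomRow k lam i)
    (hw : IsGrassmannianOfShape k (Function.update lam i (lam i - 1)) w) {p : Fin n}
    (hp : (p : ℕ) = k - i) : (w p : ℕ) = k - i + (lam i - 1) := by
  have hi := Finset.mem_Icc.1 h.1
  rw [hw.1 p (by omega), hp, Nat.sub_sub_self hi.2, Function.update_self]

lemma inv_apply_eq (h : IsBottomRow k lam i)
    (hw : IsGrassmannianOfShape k (Function.update lam i (lam i - 1)) w) {x : Fin n}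
    (hx : (x : ℕ) = k - i + (lam i - 1)) : (w⁻¹ x : ℕ) = k - i := by
  have : w⁻¹ x = ⟨k - i, by omega⟩ := by
    rw [Equiv.Perm.inv_eq_iff_eq, Fin.ext_iff, hw.apply_bottomRow h rfl, hx]
  rw [this]

lemma inv_lt (h : IsBottomRow k lam i)
    (hw : IsGrassmannianOfShape k (Function.update lam i (lam i - 1)) w) {x y : Fin n}
    (hx : (x : ℕ) = k - i + (lam i - 1)) (hy : (y : ℕ) = x + 1) : w⁻¹ x < w⁻¹ y := by
  have hwy : (w (w⁻¹ y) : ℕ) = y := by simp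
  by_contra hle
  rw [not_lt, Fin.le_def, hw.inv_apply_eq h hx] at hle
  rcases Nat.lt_or_eq_of_le hle with hlt | heq
  · rw [hw.apply_of_lt_bottomRow h hlt] at hwy
    omega
  · rw [hw.apply_bottomRow h heq] at hwy
    omega

lemma swap_mul (hY : IsYoung n k lam) (h : IsBottomRow k lam i)
    (hw : IsGrassmannianOfShape k (Function.update lam i (lam i - 1)) w) {x y : Fin n}
    (hx : (x : ℕ) = k - i + (lam i - 1)) (hy : (y : ℕ) = x + 1) :
    IsGrassmannianOfShape k lam (Equiv.swap x y * w) := by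
  have hi := Finset.mem_Icc.1 h.1
  have hpos := h.2.1
  refine ⟨fun p hp => ?_, hw.2.swap_mul hy fun p (hp : k ≤ (p : ℕ)) hpx => ?_⟩
  · rw [Equiv.Perm.mul_apply]
    rcases lt_trichotomy (p : ℕ) (k - i) with hlt | heq | hgt
    · rw [hw.apply_of_lt_bottomRow h hlt, h.2.2 _ (by omega),
        Equiv.swap_apply_of_ne_of_ne (Fin.ne_of_val_ne (by omega)) (Fin.ne_of_val_ne (by omega))]
      rfl
    · rw [show w p = x from Fin.ext ((hw.apply_bottomRow h heq).trans hx.symm),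
        Equiv.swap_apply_left, hy, hx, heq, Nat.sub_sub_self hi.2]
      omega
    · have hrow : lam i ≤ lam (k - p) := hY.antitone (by omega) (by omega)
      have hwp : (w p : ℕ) = p + lam (k - p) := by
        rw [hw.1 p hp, Function.update_of_ne (by omega)]
      have hx' : w p ≠ x := Fin.ne_of_val_ne (by omega)
      have hy' : w p ≠ y := Fin.ne_of_val_ne (by omega)
      rw [Equiv.swap_apply_of_ne_of_ne hx' hy', hwp]
  · have := hw.inv_apply_eq h hx
    rw [← Equiv.Perm.eq_inv_iff_eq.2 hpx] at this
    omega

end IsGrassmannianOfShape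

end Grassmannian

section Word

variable {n k : ℕ} {lam : ℕ → ℕ}

lemma wperm_eq_swap_mul (hY : IsYoung n k lam) {i : ℕ} (h : IsBottomRow k lam i) :
    ∃ x y : Fin n, (x : ℕ) = k - i + (lam i - 1) ∧ (y : ℕ) = x + 1 ∧
      wperm n k lam = Equiv.swap x y * wperm n k (Function.update lam i (lam i - 1)) := by
  have hi := Finset.mem_Icc.1 h.1
  have hpos := h.2.1
  have hbound := hY.apply_le_sub hi.1
  refine ⟨⟨k - i + (lam i - 1), by omega⟩, ⟨k - i + lam i, by omega⟩, rfl,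
    by dsimp only; omega, ?_⟩
  rw [wperm, wword, boxList_eq_cons h, List.map_cons, List.map_cons, List.prod_cons, sperm,
    dif_pos (by omega)]
  congr 2 <;> simp <;> omega

theorem isGrassmannianOfShape_wperm_and_len_wperm (hY : IsYoung n k lam) :
    IsGrassmannianOfShape k lam (wperm n k lam) ∧
      len (wperm n k lam) = ∑ i ∈ Finset.Icc 1 k, lam i := by
  induction hsum : ∑ i ∈ Finset.Icc 1 k, lam i generalizing lam with
  | zero =>
    have hzero : ∀ i ∈ Finset.Icc 1 k, lam i = 0 := Finset.sum_eq_zero_iff.1 hsum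
    have hboxes : boxList k lam = [] := by
      rw [boxList_eq_of_le (Nat.zero_le k) fun j hj => ?_]
      · rfl
      · by_cases hjk : j ≤ k
        · exact hzero j (Finset.mem_Icc.2 ⟨hj, hjk⟩)
        · exact hY.2.2 j (by omega)
    have hone : wperm n k lam = 1 := by rw [wperm, wword, hboxes]; rfl
    rw [hone]
    exact ⟨isGrassmannianOfShape_one hzero, len_one⟩
  | succ N ih =>
    obtain ⟨i, h⟩ := hY.exists_isBottomRow (by omega)
    obtain ⟨x, y, hx, hy, hperm⟩ := wperm_eq_swap_mul hY h
    obtain ⟨hw, hlen⟩ := ih (hY.update_bottomRow h) (by have := sum_update_bottomRow h; omega)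
    rw [hperm]
    exact ⟨hw.swap_mul hY h hx hy, by rw [len_swap_mul_of_inv_lt hy (hw.inv_lt h hx hy), hlen]⟩

end Word

theorem wperm_length_general (n k : ℕ) (lam : ℕ → ℕ) (hY : IsYoung n k lam) :
    len (wperm n k lam) = ∑ i ∈ Finset.Icc 1 k, lam i ∧
    (wword k lam).length = ∑ i ∈ Finset.Icc 1 k, lam i :=
  ⟨(isGrassmannianOfShape_wperm_and_len_wperm hY).2,
    by rw [wword, List.length_map, length_boxList]⟩

/-- The number of inversions of w_λ equals |λ|; equivalently, the
defining word of w_λ (of length |λ|) is reduced. -/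
theorem wperm_length (n k : ℕ) (hk : 0 < k) (hkn : k < n)
    (lam : ℕ → ℕ) (hY : IsYoung n k lam) :
    len (wperm n k lam) = ∑ i ∈ Finset.Icc 1 k, lam i ∧
    (wword k lam).length = ∑ i ∈ Finset.Icc 1 k, lam i :=
  wperm_length_general n k lam hY

end
end

section
/- Every nonempty Young diagram λ inside the k×(n−k) rectangle can be written as a disjoint union of box sets λ = λ′ ⊔ μ, where λ′ is a Young diagram, μ is a nonempty rectangle (i.e. μ = {(i,j) : i₁ ≤ i ≤ i₂, j₁ ≤ j ≤ j₂} for some i₁ ≤ i₂ and j₁ ≤ j₂), and for every box (i,j) of λ′ the shift of λ′ at (i,j) equals the shift of λ at (i,j). -/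
open scoped Classical

set_option maxHeartbeats 1000000
set_option synthInstance.maxHeartbeats 1000000

noncomputable section

/-!
The shifts have the closed form `r_{ij} = max (i' - i + λ_{i'} - j + 1)` over the rows
`i' ≥ i` with `j ≤ λ_{i'}`: the length of the longest right/down lattice path in `λ` from
`(i, j)`. Take a corner `b` of `λ` minimizing the content `b + λ_b`, and let `μ` consist of
the boxes beyond column `λ_{b+1}` in the rows of length `λ_b`. Removing `μ` leaves a Young
diagram `λ'`, and a path of `λ` ending in `μ` can be rerouted, inside `λ'`, to another corner
of `λ`, which by minimality ends at least as far; so no shift of `λ'` changes.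
-/

def IsDiagram (k : ℕ) (lam : ℕ → ℕ) : Prop :=
  (∀ i, 1 ≤ i → lam (i + 1) ≤ lam i) ∧ ∀ i, k < i → lam i = 0

def IsCornerRow (lam : ℕ → ℕ) (c : ℕ) : Prop :=
  1 ≤ c ∧ lam (c + 1) < lam c

def removeBlock (lam : ℕ → ℕ) (b : ℕ) : ℕ → ℕ :=
  fun i => if lam i = lam b then lam (b + 1) else lam i

def shiftOf (k : ℕ) (lam : ℕ → ℕ) (i j : ℕ) : ℕ :=
  if 1 ≤ i ∧ 1 ≤ j then
    ((Finset.Icc i k).filter fun i' => j ≤ lam i').sup fun i' => i' + lam i' + 1 - i - j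
  else 0

lemma IsYoung.isDiagram {n k : ℕ} {lam : ℕ → ℕ} (h : IsYoung n k lam) : IsDiagram k lam :=
  ⟨h.1, h.2.2⟩

namespace IsDiagram

variable {k : ℕ} {lam : ℕ → ℕ}

lemma antitone (hd : IsDiagram k lam) {i i' : ℕ} (hi : 1 ≤ i) (hii' : i ≤ i') :
    lam i' ≤ lam i := by
  induction i', hii' using Nat.le_induction with
  | base => exact le_rfl
  | succ m hm ih => exact (hd.1 m (by omega)).trans ih

lemma le_of_pos (hd : IsDiagram k lam) {i : ℕ} (hi : 0 < lam i) : i ≤ k := by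
  by_contra h
  have := hd.2 i (by omega)
  omega

lemma exists_corner_ge (hd : IsDiagram k lam) {i j : ℕ} (hi : 1 ≤ i) (hj : 1 ≤ j)
    (hji : j ≤ lam i) : ∃ c, i ≤ c ∧ c ≤ k ∧ j ≤ lam c ∧ lam (c + 1) < j := by
  have hik := hd.le_of_pos (i := i) (by omega)
  have hvanish : lam (k + 1) < j := by rw [hd.2 (k + 1) (by omega)]; omega
  have hex : ∃ c, i ≤ c ∧ lam (c + 1) < j := ⟨k, hik, hvanish⟩
  obtain ⟨hic, hcj⟩ := Nat.find_spec hex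
  refine ⟨Nat.find hex, hic, Nat.find_min' hex ⟨hik, hvanish⟩, ?_, hcj⟩
  rcases hic.eq_or_lt with h | h
  · rwa [← h]
  · have := Nat.find_min hex (m := Nat.find hex - 1) (by omega)
    rw [Nat.sub_add_cancel (by omega)] at this
    omega

lemma exists_corner_min (hd : IsDiagram k lam) {i : ℕ} (hi : 1 ≤ i) (hpos : 1 ≤ lam i) :
    ∃ b, IsCornerRow lam b ∧ ∀ c, IsCornerRow lam c → b + lam b ≤ c + lam c := by
  obtain ⟨c, hic, -, hc, hc1⟩ := hd.exists_corner_ge hi le_rfl hpos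
  obtain ⟨b, hb, hmin⟩ :=
    (measure fun c => c + lam c).wf.has_min {c | IsCornerRow lam c} ⟨c, by omega, by omega⟩
  exact ⟨b, hb, fun c hc => not_lt.mp (hmin c hc)⟩

end IsDiagram

section shiftOf

variable {k : ℕ} {lam : ℕ → ℕ}

lemma le_shiftOf {i j i' : ℕ} (hi : 1 ≤ i) (hj : 1 ≤ j) (hii' : i ≤ i') (hi'k : i' ≤ k)
    (hji' : j ≤ lam i') : i' + lam i' + 1 - i - j ≤ shiftOf k lam i j := by
  rw [shiftOf, if_pos ⟨hi, hj⟩]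
  exact Finset.le_sup (f := fun i' => i' + lam i' + 1 - i - j)
    (Finset.mem_filter.mpr ⟨Finset.mem_Icc.mpr ⟨hii', hi'k⟩, hji'⟩)

lemma shiftOf_le {i j m : ℕ}
    (h : ∀ i', i ≤ i' → i' ≤ k → j ≤ lam i' → i' + lam i' + 1 - i - j ≤ m) :
    shiftOf k lam i j ≤ m := by
  unfold shiftOf
  split
  · refine Finset.sup_le fun i' hi' => ?_
    simp only [Finset.mem_filter, Finset.mem_Icc] at hi'
    exact h i' hi'.1.1 hi'.1.2 hi'.2
  · exact Nat.zero_le m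

lemma shiftOf_eq_zero_of_lt (hd : IsDiagram k lam) {i j : ℕ} (hi : 1 ≤ i) (hj : lam i < j) :
    shiftOf k lam i j = 0 := by
  refine Nat.eq_zero_of_le_zero (shiftOf_le fun i' hii' _ hji' => ?_)
  have := hd.antitone hi hii'
  omega

lemma shiftOf_lt_shiftOf {i j i₀ j₀ : ℕ} (hi₀ : 1 ≤ i₀) (hj₀ : 1 ≤ j₀) (hi : i₀ ≤ i)
    (hj : j₀ ≤ j) (hlt : i₀ + j₀ < i + j) (hpos : 1 ≤ shiftOf k lam i₀ j₀) :
    shiftOf k lam i j < shiftOf k lam i₀ j₀ := by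
  have : shiftOf k lam i j ≤ shiftOf k lam i₀ j₀ - 1 := shiftOf_le fun i' hii' hi'k hji' => by
    have := le_shiftOf hi₀ hj₀ (hi.trans hii') hi'k (hj.trans hji')
    omega
  omega

theorem isShifts_shiftOf (hd : IsDiagram k lam) : IsShifts lam (shiftOf k lam) := by
  intro i j
  split_ifs with hbox
  swap
  · by_cases hij : 1 ≤ i ∧ 1 ≤ j
    · exact shiftOf_eq_zero_of_lt hd hij.1 (by omega)
    · rw [shiftOf, if_neg hij]
  obtain ⟨hi, hj, hji⟩ := hbox
  have hik := hd.le_of_pos (i := i) (by omega)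
  have hpos : 1 ≤ shiftOf k lam i j := by have := le_shiftOf hi hj le_rfl hik hji; omega
  have hright := shiftOf_lt_shiftOf (k := k) (lam := lam) hi hj le_rfl (Nat.le_add_right j 1)
    (by omega) hpos
  have hdown := shiftOf_lt_shiftOf (k := k) (lam := lam) hi hj (Nat.le_add_right i 1) le_rfl
    (by omega) hpos
  -- a longest path from `(i, j)` either continues in row `i` or leaves it downwards
  have hle : shiftOf k lam i j ≤
      max (shiftOf k lam i (j + 1)) (shiftOf k lam (i + 1) j) + 1 :=
    shiftOf_le fun i' hii' hi'k hji' => by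
      rcases Nat.lt_or_ge (lam i') (j + 1) with hrow | hrow
      · rcases hii'.eq_or_lt with rfl | hlt
        · omega
        · have := le_shiftOf (k := k) (i := i + 1) (by omega) hj hlt hi'k hji'
          omega
      · have := le_shiftOf (k := k) hi (by omega) hii' hi'k hrow
        omega
  omega

theorem IsShifts.unique (hd : IsDiagram k lam) {r r' : ℕ → ℕ → ℕ} (hr : IsShifts lam r)
    (hr' : IsShifts lam r') : r = r' := by
  -- `λ` has no box `(i, j)` with `i + j > k + λ₁`; induct downwards from there
  suffices h : ∀ t i j, k + lam 1 + 1 ≤ i + j + t → r i j = r' i j from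
    funext fun i => funext fun j => h (k + lam 1 + 1) i j (by omega)
  intro t
  induction t with
  | zero =>
    intro i j hij
    rw [hr i j, hr' i j, if_neg, if_neg] <;>
    · rintro ⟨hi, hj, hji⟩
      have := hd.le_of_pos (i := i) (by omega)
      have := hd.antitone le_rfl hi
      omega
  | succ t ih =>
    intro i j hij
    rw [hr i j, hr' i j, ih i (j + 1) (by omega), ih (i + 1) j (by omega)]

lemma IsShifts.eq_shiftOf (hd : IsDiagram k lam) {r : ℕ → ℕ → ℕ} (hr : IsShifts lam r) :
    r = shiftOf k lam :=
  hr.unique hd (isShifts_shiftOf hd)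

lemma shiftOf_eq_of_le {lam' : ℕ → ℕ} (hle : ∀ i, lam' i ≤ lam i) {i j : ℕ} (hi : 1 ≤ i)
    (hj : 1 ≤ j) (hdom : ∀ i', i ≤ i' → i' ≤ k → j ≤ lam i' →
      ∃ c, i ≤ c ∧ c ≤ k ∧ j ≤ lam' c ∧ i' + lam i' ≤ c + lam' c) :
    shiftOf k lam' i j = shiftOf k lam i j := by
  apply le_antisymm
  · refine shiftOf_le fun i' hii' hi'k hji' => ?_
    have := le_shiftOf hi hj hii' hi'k (hji'.trans (hle i'))
    have := hle i'
    omega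
  · refine shiftOf_le fun i' hii' hi'k hji' => ?_
    obtain ⟨c, hic, hck, hjc, hfar⟩ := hdom i' hii' hi'k hji'
    have := le_shiftOf hi hj hic hck hjc
    omega

end shiftOf

section removeBlock

variable {k : ℕ} {lam : ℕ → ℕ} {b : ℕ}

lemma removeBlock_le (hb : IsCornerRow lam b) (i : ℕ) : removeBlock lam b i ≤ lam i := by
  have := hb.2
  unfold removeBlock
  split_ifs <;> omega

lemma removeBlock_of_ne {i : ℕ} (h : lam i ≠ lam b) : removeBlock lam b i = lam i :=
  if_neg h

lemma IsYoung.removeBlock {n : ℕ} (hY : IsYoung n k lam) (hb : IsCornerRow lam b) :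
    IsYoung n k (removeBlock lam b) := by
  refine ⟨fun i hi => ?_, (removeBlock_le hb 1).trans hY.2.1, fun i hik => ?_⟩
  · have hrow := hY.1 i hi
    have := hb.2
    unfold _root_.removeBlock
    split_ifs with h h'
    · exact le_rfl
    · omega
    · have : b ≤ i := by
        by_contra hib
        have := hY.isDiagram.antitone (show 1 ≤ i + 1 by omega) (show i + 1 ≤ b by omega)
        omega
      exact hY.isDiagram.antitone (show 1 ≤ b + 1 by omega) (show b + 1 ≤ i + 1 by omega)
    · exact hrow
  · have := removeBlock_le hb i
    have := hY.2.2 i hik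
    omega

lemma IsDiagram.exists_rows_eq_Icc (hd : IsDiagram k lam) (hb : IsCornerRow lam b) :
    ∃ i₁, 1 ≤ i₁ ∧ i₁ ≤ b ∧ ∀ i, (1 ≤ i ∧ lam i = lam b) ↔ (i₁ ≤ i ∧ i ≤ b) := by
  have hex : ∃ i, 1 ≤ i ∧ lam i = lam b := ⟨b, hb.1, rfl⟩
  obtain ⟨hi₁, hi₁b⟩ := Nat.find_spec hex
  refine ⟨Nat.find hex, hi₁, Nat.find_min' hex ⟨hb.1, rfl⟩, fun i => ⟨?_, ?_⟩⟩
  · rintro ⟨hi, hib⟩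
    refine ⟨Nat.find_min' hex ⟨hi, hib⟩, ?_⟩
    by_contra hbi
    have := hd.antitone (show 1 ≤ b + 1 by omega) (show b + 1 ≤ i by omega)
    have := hb.2
    omega
  · rintro ⟨hi₁i, hib⟩
    have := hd.antitone hi₁ hi₁i
    have := hd.antitone (hi₁.trans hi₁i) hib
    exact ⟨by omega, by omega⟩

lemma shiftOf_removeBlock (hd : IsDiagram k lam) (hb : IsCornerRow lam b)
    (hmin : ∀ c, IsCornerRow lam c → b + lam b ≤ c + lam c) {i j : ℕ} (hi : 1 ≤ i)
    (hj : 1 ≤ j) (hji : j ≤ removeBlock lam b i) :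
    shiftOf k (removeBlock lam b) i j = shiftOf k lam i j := by
  have ⟨hb1, hbb⟩ := hb
  refine shiftOf_eq_of_le (removeBlock_le hb) hi hj fun i' hii' hi'k hji' => ?_
  by_cases hblock : lam i' = lam b
  swap
  · have h' := removeBlock_of_ne hblock
    exact ⟨i', hii', hi'k, h' ▸ hji', h' ▸ le_rfl⟩
  have hi'b : i' ≤ b := by
    by_contra h
    have := hd.antitone (show 1 ≤ b + 1 by omega) (show b + 1 ≤ i' by omega)
    omega
  -- reroute to a corner `c` outside the block
  obtain ⟨c, hic, hck, hjc, hc⟩ : ∃ c, i ≤ c ∧ c ≤ k ∧ j ≤ lam c ∧ lam (c + 1) < lam c ∧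
      lam c ≠ lam b := by
    by_cases hjb : j ≤ lam (b + 1)
    · obtain ⟨c, hbc, hck, hjc, hcj⟩ := hd.exists_corner_ge (by omega) hj hjb
      exact ⟨c, by omega, hck, hjc, by omega, by have := hd.antitone (by omega) hbc; omega⟩
    · have hib : lam i ≠ lam b := fun h => by
        simp only [removeBlock, if_pos h] at hji
        omega
      have := hd.antitone hi hii'
      obtain ⟨c, hic, hck, hjc, hcj⟩ := hd.exists_corner_ge hi (j := lam b + 1) (by omega)
        (by omega)
      exact ⟨c, hic, hck, by omega, by omega, by omega⟩
  have hcmin := hmin c ⟨by omega, by omega⟩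
  have hc' := removeBlock_of_ne hc.2
  exact ⟨c, hic, hck, hc' ▸ hjc, by rw [hc']; omega⟩

end removeBlock

theorem young_rectangle_decomposition_general (n k : ℕ)
    (lam : ℕ → ℕ) (hY : IsYoung n k lam) (hne : ∃ i, 1 ≤ i ∧ 1 ≤ lam i) :
    ∃ lam' : ℕ → ℕ, ∃ i1 i2 j1 j2 : ℕ,
      IsYoung n k lam' ∧ 1 ≤ i1 ∧ i1 ≤ i2 ∧ 1 ≤ j1 ∧ j1 ≤ j2 ∧
      (∀ p : ℕ × ℕ,
        (1 ≤ p.1 ∧ 1 ≤ p.2 ∧ p.2 ≤ lam p.1) ↔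
          ((1 ≤ p.1 ∧ 1 ≤ p.2 ∧ p.2 ≤ lam' p.1) ∨
            (i1 ≤ p.1 ∧ p.1 ≤ i2 ∧ j1 ≤ p.2 ∧ p.2 ≤ j2))) ∧
      (∀ p : ℕ × ℕ,
        ¬((1 ≤ p.1 ∧ 1 ≤ p.2 ∧ p.2 ≤ lam' p.1) ∧
          (i1 ≤ p.1 ∧ p.1 ≤ i2 ∧ j1 ≤ p.2 ∧ p.2 ≤ j2))) ∧
      (∀ r r' : ℕ → ℕ → ℕ, IsShifts lam r → IsShifts lam' r' →
        ∀ i j, 1 ≤ i → 1 ≤ j → j ≤ lam' i → r' i j = r i j) := by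
  have hd := hY.isDiagram
  obtain ⟨i₀, hi₀, hpos⟩ := hne
  obtain ⟨b, hb, hmin⟩ := hd.exists_corner_min hi₀ hpos
  obtain ⟨i₁, hi₁, hi₁b, hrows⟩ := hd.exists_rows_eq_Icc hb
  have hY' := hY.removeBlock hb
  refine ⟨removeBlock lam b, i₁, b, lam (b + 1) + 1, lam b, hY', hi₁, hi₁b, by omega,
    hb.2, fun p => ?union, fun p => ?disjoint, fun r r' hr hr' i j hi hj hji => ?shifts⟩
  case shifts =>
    rw [hr.eq_shiftOf hd, hr'.eq_shiftOf hY'.isDiagram]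
    exact shiftOf_removeBlock hd hb hmin hi hj hji
  all_goals
    have := hrows p.1
    have := hb.2
    unfold removeBlock
    split_ifs <;> omega

/-- Every nonempty Young diagram λ inside the k×(n−k) rectangle is a
disjoint union λ = λ′ ⊔ μ of a Young diagram λ′ and a nonempty rectangle μ, such that
the shifts of λ′ agree with those of λ on every box of λ′. -/
theorem young_rectangle_decomposition (n k : ℕ) (hk : 0 < k) (hkn : k < n)
    (lam : ℕ → ℕ) (hY : IsYoung n k lam) (hne : ∃ i, 1 ≤ i ∧ 1 ≤ lam i) :
    ∃ lam' : ℕ → ℕ, ∃ i1 i2 j1 j2 : ℕ,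
      IsYoung n k lam' ∧ 1 ≤ i1 ∧ i1 ≤ i2 ∧ 1 ≤ j1 ∧ j1 ≤ j2 ∧
      (∀ p : ℕ × ℕ,
        (1 ≤ p.1 ∧ 1 ≤ p.2 ∧ p.2 ≤ lam p.1) ↔
          ((1 ≤ p.1 ∧ 1 ≤ p.2 ∧ p.2 ≤ lam' p.1) ∨
            (i1 ≤ p.1 ∧ p.1 ≤ i2 ∧ j1 ≤ p.2 ∧ p.2 ≤ j2))) ∧
      (∀ p : ℕ × ℕ,
        ¬((1 ≤ p.1 ∧ 1 ≤ p.2 ∧ p.2 ≤ lam' p.1) ∧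
          (i1 ≤ p.1 ∧ p.1 ≤ i2 ∧ j1 ≤ p.2 ∧ p.2 ≤ j2))) ∧
      (∀ r r' : ℕ → ℕ → ℕ, IsShifts lam r → IsShifts lam' r' →
        ∀ i j, 1 ≤ i → 1 ≤ j → j ≤ lam' i → r' i j = r i j) :=
  young_rectangle_decomposition_general n k lam hY hne

end
end
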